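/- arXiv:2109.14454 — 2 statements merged into one kernel-verified Lean document; each statement's English description precedes it below -/
import Mathlib

section
/- Every x ∈ X^N satisfies the Nikol'skii-type inequality sup_{t∈[0,1]} |x(t)| ≤ (1−ε)^{−1}·N·‖x‖_{L_1[0,1]}. -/
open MeasureTheory Set Finset

/-!
Write `x = ∑ aⱼ xⱼ` and split `[0, 1)` into the blocks `[(k-1)/N, k/N)`. On a block with
`k > n` only `x_k` is nonzero, so `x = N a_k` there and `|x| ≤ N ‖x‖₁`. On a block with
`k ≤ n`, `|x| ≤ N (|a_k| + A)` with `A = ∑_{j>n} |aⱼ|`, while the integral of `x` over the block is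
`a_k + m⁻¹ ∑_{j>n} aⱼ`, so `|a_k| ≤ ∫_block |x| + A/m`. The block `k` and the blocks `j > n` are
disjoint and each of the latter carries `∫ |x| = |aⱼ|`, hence `|x| ≤ (1 + 1/m) N ‖x‖₁`, and
`1/m = ε/n ≤ ε` gives `1 + 1/m ≤ (1 - ε)⁻¹`.
-/

/-- The interval `I_k(i)` of width `1/(m*N)`, the `i`-th subinterval (1-based)
of `[(k-1)/N, k/N)`. -/
noncomputable def Ik (m N k i : ℕ) : Set ℝ :=
  Set.Ico (((k : ℝ) - 1) / N + ((i : ℝ) - 1) / (m * N))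
    (((k : ℝ) - 1) / N + (i : ℝ) / (m * N))

/-- The functions `x_j` of the construction: for `1 ≤ j ≤ n`,
`x_j = N·𝟙_{[(j-1)/N, j/N)}`, and for `n < j ≤ N`,
`x_j = N·∑_{k=1}^n 𝟙_{I_k(i_{k,j})} + N·𝟙_{[(j-1)/N, j/N)}`, where the indices
`i_{k,j}` are encoded (0-based) by the map `idx`. -/
noncomputable def xfun (n m N : ℕ) (idx : ℕ → Fin n → Fin m) (j : ℕ) : ℝ → ℝ :=
  fun t =>
    if j ≤ n then
      (N : ℝ) * Set.indicator (Set.Ico (((j : ℝ) - 1) / N) ((j : ℝ) / N)) (fun _ => (1 : ℝ)) t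
    else
      (N : ℝ) * ∑ k : Fin n,
          Set.indicator (Ik m N ((k : ℕ) + 1) ((idx j k : ℕ) + 1)) (fun _ => (1 : ℝ)) t
        + (N : ℝ) * Set.indicator (Set.Ico (((j : ℝ) - 1) / N) ((j : ℝ) / N)) (fun _ => (1 : ℝ)) t

lemma one_add_le_inv_one_sub {ε : ℝ} (hε : 0 ≤ ε) (hε1 : ε < 1) :
    1 + ε ≤ (1 - ε)⁻¹ := by
  rw [le_inv_comm₀ (by linarith) (by linarith), inv_eq_one_div, le_div_iff₀ (by linarith)]
  nlinarith

lemma abs_indicator_one_le (s : Set ℝ) (t : ℝ) : |s.indicator (1 : ℝ → ℝ) t| ≤ 1 := by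
  by_cases h : t ∈ s <;> simp [h]

lemma integrable_indicator_Ico_one (a b : ℝ) :
    Integrable ((Set.Ico a b).indicator (1 : ℝ → ℝ)) :=
  (integrable_indicator_iff measurableSet_Ico).2 (integrableOn_const measure_Ico_lt_top.ne)

noncomputable def block (N k : ℕ) : Set ℝ := Set.Ico (((k : ℝ) - 1) / N) ((k : ℝ) / N)

section Geometry

variable {m N : ℕ}

lemma measurableSet_block (N k : ℕ) : MeasurableSet (block N k) := measurableSet_Ico

lemma mem_block_iff (hN : 0 < N) {k : ℕ} {t : ℝ} :
    t ∈ block N k ↔ ⌊t * N⌋ = (k : ℤ) - 1 := by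
  have hN' : (0 : ℝ) < N := by exact_mod_cast hN
  rw [block, Set.mem_Ico, div_le_iff₀ hN', lt_div_iff₀ hN', Int.floor_eq_iff]
  push_cast
  constructor <;> rintro ⟨h₁, h₂⟩ <;> constructor <;> linarith

lemma eq_of_mem_block (hN : 0 < N) {j k : ℕ} {t : ℝ} (hj : t ∈ block N j)
    (hk : t ∈ block N k) : j = k := by
  rw [mem_block_iff hN] at hj hk
  omega

lemma mem_block_floor_add_one (hN : 0 < N) {t : ℝ} (ht : t ∈ Set.Ico (0 : ℝ) 1) :
    ⌊t * N⌋₊ < N ∧ t ∈ block N (⌊t * N⌋₊ + 1) := by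
  have hN' : (0 : ℝ) < N := by exact_mod_cast hN
  have htN : 0 ≤ t * N := mul_nonneg ht.1 hN'.le
  refine ⟨(Nat.floor_lt htN).2 (by nlinarith [ht.2]), ?_⟩
  rw [mem_block_iff hN, ← Int.natCast_floor_eq_floor htN]
  push_cast
  ring

lemma one_notMem_block (hN : 0 < N) {k : ℕ} (hk : k ≤ N) : (1 : ℝ) ∉ block N k := by
  rw [mem_block_iff hN, one_mul, Int.floor_natCast]
  omega

lemma block_subset_Ico {k : ℕ} (hk : 1 ≤ k) (hkN : k ≤ N) :
    block N k ⊆ Set.Ico (0 : ℝ) 1 := by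
  have hk' : (1 : ℝ) ≤ k := by exact_mod_cast hk
  have hkN' : (k : ℝ) ≤ N := by exact_mod_cast hkN
  refine Set.Ico_subset_Ico (div_nonneg (by linarith) (Nat.cast_nonneg _)) ?_
  exact div_le_one_of_le₀ hkN' (Nat.cast_nonneg _)

lemma volume_real_block (N k : ℕ) : volume.real (block N k) = (N : ℝ)⁻¹ := by
  rw [block, Real.volume_real_Ico_of_le (by gcongr; linarith)]
  ring

lemma Ik_subset_block (hm : 0 < m) {k i : ℕ} (hi : 1 ≤ i) (him : i ≤ m) :
    Ik m N k i ⊆ block N k := by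
  have hi' : (1 : ℝ) ≤ i := by exact_mod_cast hi
  have hi_le : (i : ℝ) / (m * N) ≤ (N : ℝ)⁻¹ := by
    rw [← div_mul_cancel_left₀ (Nat.cast_ne_zero.2 hm.ne') (N : ℝ)]
    gcongr
  refine Set.Ico_subset_Ico (le_add_of_nonneg_right (div_nonneg (by linarith) (by positivity))) ?_
  calc ((k : ℝ) - 1) / N + i / (m * N) ≤ ((k : ℝ) - 1) / N + (N : ℝ)⁻¹ := by gcongr
    _ = k / N := by ring

lemma volume_real_Ik (m N k i : ℕ) : volume.real (Ik m N k i) = ((m : ℝ) * N)⁻¹ := by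
  rw [Ik, Real.volume_real_Ico_of_le (by gcongr; linarith)]
  ring

lemma sum_setIntegral_block_abs_le {g : ℝ → ℝ} (hg : IntegrableOn g (Set.Ico 0 1))
    (hN : 0 < N) {S : Finset ℕ} (hS : S ⊆ Finset.Ioc 0 N) :
    ∑ k ∈ S, ∫ s in block N k, |g s| ≤ ∫ s in Set.Ico 0 1, |g s| := by
  have hsub : ∀ k ∈ S, block N k ⊆ Set.Ico 0 1 := fun k hk ↦
    have hk' := Finset.mem_Ioc.1 (hS hk)
    block_subset_Ico hk'.1 hk'.2
  rw [← integral_biUnion_finset S (fun k _ ↦ measurableSet_block N k)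
    (fun j _ k _ hjk ↦ Set.disjoint_left.2 fun _ hj hk ↦ hjk (eq_of_mem_block hN hj hk))
    (fun k hk ↦ IntegrableOn.mono_set hg.abs (hsub k hk))]
  exact setIntegral_mono_set hg.abs (ae_of_all _ fun _ ↦ abs_nonneg _)
    (Set.iUnion₂_subset hsub).eventuallyLE

end Geometry

section Generators

variable {n m N : ℕ} (idx : ℕ → Fin n → Fin m)

lemma xfun_of_le {j : ℕ} (hj : j ≤ n) (t : ℝ) :
    xfun n m N idx j t = N * (block N j).indicator 1 t := by
  simp only [xfun, if_pos hj]
  rfl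

lemma xfun_of_lt {j : ℕ} (hj : n < j) (t : ℝ) :
    xfun n m N idx j t = N * ∑ k : Fin n, (Ik m N (k + 1) (idx j k + 1)).indicator 1 t
      + N * (block N j).indicator 1 t := by
  simp only [xfun, if_neg hj.not_ge]
  rfl

variable (hN : 0 < N) (hm : 0 < m)
include hN

lemma indicator_block_of_mem_block {j k : ℕ} {t : ℝ} (ht : t ∈ block N k) :
    (block N j).indicator (1 : ℝ → ℝ) t = if j = k then 1 else 0 := by
  by_cases hjk : j = k
  · simp [hjk, ht]
  · simp [hjk, Set.indicator_of_notMem (fun hj ↦ hjk (eq_of_mem_block hN hj ht))]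

lemma xfun_of_le_of_mem_block {j k : ℕ} (hj : j ≤ n) {t : ℝ} (ht : t ∈ block N k) :
    xfun n m N idx j t = if j = k then (N : ℝ) else 0 := by
  rw [xfun_of_le idx hj, indicator_block_of_mem_block hN ht]
  simp

include hm

lemma indicator_Ik_of_mem_block {k k' : ℕ} (hk : k' ≠ k) (i : Fin m) {t : ℝ}
    (ht : t ∈ block N k) : (Ik m N k' (i + 1)).indicator (1 : ℝ → ℝ) t = 0 :=
  Set.indicator_of_notMem (fun hi ↦ hk (eq_of_mem_block hN
    (Ik_subset_block hm (Nat.le_add_left 1 i) i.isLt hi) ht)) _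

lemma xfun_of_mem_block_of_lt {j k : ℕ} (hk : n < k) {t : ℝ} (ht : t ∈ block N k) :
    xfun n m N idx j t = if j = k then (N : ℝ) else 0 := by
  rcases le_or_gt j n with hj | hj
  · exact xfun_of_le_of_mem_block idx hN hj ht
  rw [xfun_of_lt idx hj, indicator_block_of_mem_block hN ht,
    Finset.sum_eq_zero (fun k' _ ↦ indicator_Ik_of_mem_block hN hm (by omega) _ ht)]
  simp

lemma xfun_of_lt_of_mem_block_succ (k : Fin n) {j : ℕ} (hj : n < j) {t : ℝ}
    (ht : t ∈ block N (k + 1)) :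
    xfun n m N idx j t = N * (Ik m N (k + 1) (idx j k + 1)).indicator 1 t := by
  rw [xfun_of_lt idx hj, indicator_block_of_mem_block hN ht, if_neg (by omega),
    Fintype.sum_eq_single k (fun k' hk' ↦ indicator_Ik_of_mem_block hN hm
      (by simpa [Fin.val_eq_val] using hk') _ ht)]
  simp

lemma xfun_one (hnN : n ≤ N) {j : ℕ} (hj : j ≤ N) : xfun n m N idx j 1 = 0 := by
  have h1 : ∀ k ≤ N, (block N k).indicator (1 : ℝ → ℝ) 1 = 0 :=
    fun k hk ↦ Set.indicator_of_notMem (one_notMem_block hN hk) _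
  rcases le_or_gt j n with hjn | hjn
  · rw [xfun_of_le idx hjn, h1 j hj, mul_zero]
  rw [xfun_of_lt idx hjn, h1 j hj, Finset.sum_eq_zero]
  · simp
  intro k _
  exact Set.indicator_of_notMem (fun h ↦ one_notMem_block hN (k.isLt.trans_le hnN)
    (Ik_subset_block hm (Nat.le_add_left 1 _) (idx j k).isLt h)) _

end Generators

section Integrals

variable {n m N : ℕ} (idx : ℕ → Fin n → Fin m)

lemma integrable_xfun (j : ℕ) : Integrable (xfun n m N idx j) := by
  rcases le_or_gt j n with hj | hj
  · simp_rw [funext (xfun_of_le idx hj)]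
    exact (integrable_indicator_Ico_one _ _).const_mul _
  · simp_rw [funext (xfun_of_lt idx hj)]
    exact ((integrable_finsetSum _ fun k _ ↦ integrable_indicator_Ico_one _ _).const_mul _).add
      ((integrable_indicator_Ico_one _ _).const_mul _)

variable (hN : 0 < N)
include hN

lemma setIntegral_block_xfun_of_le {j : ℕ} (hj : j ≤ n) (k : ℕ) :
    ∫ s in block N k, xfun n m N idx j s = if j = k then 1 else 0 := by
  have hN' : (N : ℝ) ≠ 0 := by exact_mod_cast hN.ne'
  rw [setIntegral_congr_fun (measurableSet_block N k)
    (fun s hs ↦ xfun_of_le_of_mem_block idx hN hj hs)]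
  split_ifs <;> simp [volume_real_block, hN']

lemma setIntegral_block_succ_xfun_of_lt (hm : 0 < m) (k : Fin n) {j : ℕ} (hj : n < j) :
    ∫ s in block N (k + 1), xfun n m N idx j s = (m : ℝ)⁻¹ := by
  have hN' : (N : ℝ) ≠ 0 := by exact_mod_cast hN.ne'
  rw [setIntegral_congr_fun (measurableSet_block N _)
      (fun s hs ↦ xfun_of_lt_of_mem_block_succ idx hN hm k hj hs),
    integral_const_mul, setIntegral_indicator (t := Ik m N _ _) measurableSet_Ico,
    Set.inter_eq_self_of_subset_right (Ik_subset_block hm (Nat.le_add_left 1 _) (idx j k).isLt)]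
  simp [volume_real_Ik]
  field_simp

end Integrals

section Combinations

variable {n m N : ℕ} (idx : ℕ → Fin n → Fin m) (a : ℕ → ℝ)

lemma sum_smul_xfun_apply (s : Finset ℕ) (t : ℝ) :
    (∑ j ∈ s, a j • xfun n m N idx j) t = ∑ j ∈ s, a j * xfun n m N idx j t := by
  simp [Finset.sum_apply]

lemma integrable_sum_smul_xfun (s : Finset ℕ) :
    Integrable (∑ j ∈ s, a j • xfun n m N idx j) :=
  integrable_finsetSum' s fun j _ ↦ (integrable_xfun idx j).smul (a j)

variable (hN : 0 < N) (hm : 0 < m)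
include hN hm

lemma sum_smul_xfun_of_mem_block_of_lt {k : ℕ} (hk : n < k) (hkN : k ≤ N) {t : ℝ}
    (ht : t ∈ block N k) : (∑ j ∈ Finset.Ioc 0 N, a j • xfun n m N idx j) t = N * a k := by
  simp_rw [sum_smul_xfun_apply, xfun_of_mem_block_of_lt idx hN hm hk ht, mul_ite, mul_zero]
  rw [Finset.sum_ite_eq', if_pos (Finset.mem_Ioc.2 ⟨by omega, hkN⟩), mul_comm]

lemma setIntegral_block_abs_sum_smul_xfun_of_lt {k : ℕ} (hk : n < k) (hkN : k ≤ N) :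
    ∫ s in block N k, |(∑ j ∈ Finset.Ioc 0 N, a j • xfun n m N idx j) s| = |a k| := by
  have hN' : (0 : ℝ) < N := by exact_mod_cast hN
  rw [setIntegral_congr_fun (measurableSet_block N k)
    (fun s hs ↦ by rw [sum_smul_xfun_of_mem_block_of_lt idx a hN hm hk hkN hs])]
  simp [volume_real_block, abs_mul, abs_of_pos hN', hN'.ne']

lemma abs_sum_smul_xfun_le_integral_of_mem_block_of_lt {k : ℕ} (hk : n < k) (hkN : k ≤ N)
    {t : ℝ} (ht : t ∈ block N k) :
    |(∑ j ∈ Finset.Ioc 0 N, a j • xfun n m N idx j) t|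
      ≤ (1 + (m : ℝ)⁻¹) * N *
          ∫ s in Set.Ico 0 1, |(∑ j ∈ Finset.Ioc 0 N, a j • xfun n m N idx j) s| := by
  have hblock := sum_setIntegral_block_abs_le
    (integrable_sum_smul_xfun idx a (N := N) (Finset.Ioc 0 N)).integrableOn hN
    (Finset.singleton_subset_iff.2 (Finset.mem_Ioc.2 ⟨by omega, hkN⟩))
  rw [Finset.sum_singleton, setIntegral_block_abs_sum_smul_xfun_of_lt idx a hN hm hk hkN] at hblock
  rw [sum_smul_xfun_of_mem_block_of_lt idx a hN hm hk hkN ht, abs_mul, Nat.abs_cast, mul_assoc]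
  calc (N : ℝ) * |a k| ≤ N * ∫ s in Set.Ico 0 1, _ := by gcongr
    _ ≤ _ := le_mul_of_one_le_left (mul_nonneg (Nat.cast_nonneg _) ((abs_nonneg _).trans hblock))
        (le_add_of_nonneg_right (by positivity))

variable (hnN : n ≤ N)
include hnN

lemma abs_sum_smul_xfun_le_of_mem_block_succ (k : Fin n) {t : ℝ} (ht : t ∈ block N (k + 1)) :
    |(∑ j ∈ Finset.Ioc 0 N, a j • xfun n m N idx j) t|
      ≤ N * (|a (k + 1)| + ∑ j ∈ Finset.Ioc n N, |a j|) := by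
  have hlow : ∑ j ∈ Finset.Ioc 0 n, a j * xfun n m N idx j t = N * a (k + 1) := by
    rw [Finset.sum_congr rfl fun j hj ↦ by
      rw [xfun_of_le_of_mem_block idx hN (Finset.mem_Ioc.1 hj).2 ht]]
    simp_rw [mul_ite, mul_zero]
    rw [Finset.sum_ite_eq', if_pos (Finset.mem_Ioc.2 ⟨k.val.succ_pos, k.isLt⟩), mul_comm]
  have hhigh : ∀ j ∈ Finset.Ioc n N, |a j * xfun n m N idx j t| ≤ N * |a j| := fun j hj ↦ by
    rw [xfun_of_lt_of_mem_block_succ idx hN hm k (Finset.mem_Ioc.1 hj).1 ht, abs_mul,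
      abs_mul, Nat.abs_cast, mul_comm]
    gcongr
    exact mul_le_of_le_one_right (Nat.cast_nonneg _) (abs_indicator_one_le _ t)
  rw [sum_smul_xfun_apply, ← Finset.sum_Ioc_consecutive _ (Nat.zero_le n) hnN, hlow, mul_add,
    Finset.mul_sum]
  calc _ ≤ |N * a (k + 1)| + ∑ j ∈ Finset.Ioc n N, |a j * xfun n m N idx j t| :=
        (abs_add_le _ _).trans (add_le_add_right (Finset.abs_sum_le_sum_abs _ _) _)
    _ ≤ _ := by
      rw [abs_mul, Nat.abs_cast]
      gcongr with j hj
      exact hhigh j hj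

lemma setIntegral_block_succ_sum_smul_xfun (k : Fin n) :
    ∫ s in block N (k + 1), (∑ j ∈ Finset.Ioc 0 N, a j • xfun n m N idx j) s
      = a (k + 1) + (m : ℝ)⁻¹ * ∑ j ∈ Finset.Ioc n N, a j := by
  simp_rw [sum_smul_xfun_apply]
  rw [integral_finsetSum _ fun j _ ↦ ((integrable_xfun idx j).const_mul (a j)).integrableOn,
    ← Finset.sum_Ioc_consecutive _ (Nat.zero_le n) hnN, Finset.mul_sum]
  congr 1
  · simp_rw [integral_const_mul]
    rw [Finset.sum_congr rfl fun j hj ↦ by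
      rw [setIntegral_block_xfun_of_le idx hN (Finset.mem_Ioc.1 hj).2]]
    simp_rw [mul_ite, mul_one, mul_zero]
    rw [Finset.sum_ite_eq', if_pos (Finset.mem_Ioc.2 ⟨k.val.succ_pos, k.isLt⟩)]
  · refine Finset.sum_congr rfl fun j hj ↦ ?_
    rw [integral_const_mul, setIntegral_block_succ_xfun_of_lt idx hN hm k (Finset.mem_Ioc.1 hj).1,
      mul_comm]

lemma abs_sum_smul_xfun_le_integral_of_mem_block_succ (k : Fin n) {t : ℝ}
    (ht : t ∈ block N (k + 1)) :
    |(∑ j ∈ Finset.Ioc 0 N, a j • xfun n m N idx j) t|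
      ≤ (1 + (m : ℝ)⁻¹) * N *
          ∫ s in Set.Ico 0 1, |(∑ j ∈ Finset.Ioc 0 N, a j • xfun n m N idx j) s| := by
  have hS : insert (k.val + 1) (Finset.Ioc n N) ⊆ Finset.Ioc 0 N := by
    intro j hj
    simp only [Finset.mem_insert, Finset.mem_Ioc] at hj ⊢
    omega
  have hblocks := sum_setIntegral_block_abs_le
    (integrable_sum_smul_xfun idx a (N := N) (Finset.Ioc 0 N)).integrableOn hN hS
  rw [Finset.sum_insert (by simp), Finset.sum_congr rfl fun j hj ↦
    setIntegral_block_abs_sum_smul_xfun_of_lt idx a hN hm (Finset.mem_Ioc.1 hj).1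
      (Finset.mem_Ioc.1 hj).2] at hblocks
  have hint := setIntegral_block_succ_sum_smul_xfun idx a hN hm hnN k
  have hpoint := abs_sum_smul_xfun_le_of_mem_block_succ idx a hN hm hnN k ht
  set f := ∑ j ∈ Finset.Ioc 0 N, a j • xfun n m N idx j
  set A := ∑ j ∈ Finset.Ioc n N, |a j|
  set L := ∫ s in block N (k + 1), |f s|
  have hA : 0 ≤ A := Finset.sum_nonneg fun _ _ ↦ abs_nonneg _
  have hL : 0 ≤ L := setIntegral_nonneg (measurableSet_block N _) fun _ _ ↦ abs_nonneg _
  have ha : |a (k + 1)| ≤ L + (m : ℝ)⁻¹ * A :=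
    calc |a (k + 1)|
        = |(∫ s in block N (k + 1), f s) - (m : ℝ)⁻¹ * ∑ j ∈ Finset.Ioc n N, a j| := by
          rw [hint, add_sub_cancel_right]
      _ ≤ |∫ s in block N (k + 1), f s| + |(m : ℝ)⁻¹ * ∑ j ∈ Finset.Ioc n N, a j| :=
          abs_sub _ _
      _ ≤ L + (m : ℝ)⁻¹ * A := by
          rw [abs_mul, abs_inv, Nat.abs_cast]
          gcongr
          · exact abs_integral_le_integral_abs
          · exact Finset.abs_sum_le_sum_abs _ _
  calc |f t| ≤ N * (|a (k + 1)| + A) := hpoint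
    _ ≤ N * ((1 + (m : ℝ)⁻¹) * (L + A)) := by
        gcongr
        nlinarith [inv_nonneg.2 (Nat.cast_nonneg m : (0 : ℝ) ≤ m)]
    _ ≤ _ := by
        rw [mul_left_comm, mul_assoc]
        gcongr

theorem abs_sum_smul_xfun_le_integral {t : ℝ} (ht : t ∈ Set.Icc (0 : ℝ) 1) :
    |(∑ j ∈ Finset.Ioc 0 N, a j • xfun n m N idx j) t|
      ≤ (1 + (m : ℝ)⁻¹) * N *
          ∫ s in Set.Ico 0 1, |(∑ j ∈ Finset.Ioc 0 N, a j • xfun n m N idx j) s| := by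
  rcases eq_or_lt_of_le ht.2 with rfl | ht1
  · rw [sum_smul_xfun_apply, Finset.sum_eq_zero fun j hj ↦ by
      rw [xfun_one idx hN hm hnN (Finset.mem_Ioc.1 hj).2, mul_zero], abs_zero]
    exact mul_nonneg (by positivity) (setIntegral_nonneg measurableSet_Ico fun _ _ ↦ abs_nonneg _)
  obtain ⟨hpN, htp⟩ := mem_block_floor_add_one hN ⟨ht.1, ht1⟩
  rcases lt_or_ge ⌊t * N⌋₊ n with hpn | hpn
  · exact abs_sum_smul_xfun_le_integral_of_mem_block_succ idx a hN hm hnN ⟨_, hpn⟩ htp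
  · exact abs_sum_smul_xfun_le_integral_of_mem_block_of_lt idx a hN hm (by omega) hpN htp

end Combinations

theorem stmt2_general (n m N : ℕ) (ε : ℝ) (hn : 0 < n) (hε : 0 < ε) (hε1 : ε < 1)
    (hm : (m : ℝ) = n / ε) (hN : N = n + m ^ n)
    (idx : ℕ → Fin n → Fin m) :
    ∀ x ∈ Submodule.span ℝ (xfun n m N idx '' Set.Icc 1 N), ∀ t ∈ Set.Icc (0 : ℝ) 1,
      |x t| ≤ (1 - ε)⁻¹ * N * ∫ s in Set.Ico (0 : ℝ) 1, |x s| := by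
  have hn' : (1 : ℝ) ≤ n := by exact_mod_cast hn
  have hm0 : 0 < m := by exact_mod_cast (hm ▸ by positivity : (0 : ℝ) < m)
  have hinv_m : (m : ℝ)⁻¹ ≤ ε := by
    rw [hm, inv_div]
    exact div_le_self hε.le hn'
  intro x hx t ht
  rw [show Set.Icc 1 N = Finset.Ioc 0 N by
      ext; simp [Nat.one_le_iff_ne_zero, Nat.pos_iff_ne_zero],
    Submodule.mem_span_image_finset_iff_exists_fun'] at hx
  obtain ⟨a, rfl⟩ := hx
  have hN0 : 0 < N := by omega
  refine (abs_sum_smul_xfun_le_integral idx a hN0 hm0 (by omega) ht).trans ?_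
  gcongr
  exact (add_le_add_right hinv_m 1).trans (one_add_le_inv_one_sub hε.le hε1)

theorem stmt2 (n m N : ℕ) (ε : ℝ) (hn : 0 < n) (hε : 0 < ε) (hε1 : ε < 1)
    (hm : (m : ℝ) = n / ε) (hN : N = n + m ^ n)
    (idx : ℕ → Fin n → Fin m) (hidx : Set.BijOn idx (Set.Ioc n N) Set.univ) :
    ∀ x ∈ Submodule.span ℝ (xfun n m N idx '' Set.Icc 1 N), ∀ t ∈ Set.Icc (0 : ℝ) 1,
      |x t| ≤ (1 - ε)⁻¹ * N * ∫ s in Set.Ico (0 : ℝ) 1, |x s| :=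
  stmt2_general n m N ε hn hε hε1 hm hN idx
end

section
/- Let H be a real inner product space of finite dimension N ≥ 1, let (Ω,μ) be a probability space, and let (x_t)_{t∈Ω} be a family of vectors in H such that t ↦ ⟨x, x_t⟩ is measurable for every x ∈ H. Assume: (i) Parseval: ∫_Ω ⟨x, x_t⟩^2 dμ(t) = ‖x‖_H^2 for all x ∈ H; (ii) ‖x_t‖_H ≤ β·√N for all t ∈ Ω, where β > 0; (iii) κ-stable phase retrieval for the continuous frame: min(‖f−g‖_H, ‖f+g‖_H) ≤ κ·(∫_Ω (|⟨f, x_t⟩| − |⟨g, x_t⟩|)^2 dμ(t))^{1/2} for all f, g ∈ H, where κ > 0. Suppose M ∈ ℕ and t_1, …, t_M ∈ Ω are such that, for some A, B, C > 0: (iv) A·‖x‖_H^2 ≤ (1/M)·∑_{j=1}^M ⟨x, x_{t_j}⟩^2 ≤ B·‖x‖_H^2 for all x ∈ H, and (v) min(‖f−g‖_H, ‖f+g‖_H) ≤ C·((1/M)·∑_{j=1}^M (|⟨f, x_{t_j}⟩| − |⟨g, x_{t_j}⟩|)^2)^{1/2} for all f, g ∈ H. Then for every x ∈ H, writing y(t)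 = ⟨x, x_t⟩ for t ∈ Ω: (1) A·∫_Ω y(t)^2 dμ(t) ≤ (1/M)·∑_{j=1}^M y(t_j)^2 ≤ B·∫_Ω y(t)^2 dμ(t); and (2) A^{1/2}·B^{−3/2}·C^{−3}·(1+A^{−1}β^2)^{−3/2}·∫_Ω |y(t)| dμ(t) ≤ (1/M)·∑_{j=1}^M |y(t_j)| ≤ B^{1/2}·κ^3·(1+β^2)^{3/2}·∫_Ω |y(t)| dμ(t). -/
open MeasureTheory Set RealInnerProductSpace

/-!
Both estimates of (2) come from the inequality `‖f‖ ≤ 2 κ² β ∫ |⟪f, x t⟫| dν`, valid for every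
finite measure `ν` for which `x` does `κ`-stable phase retrieval and `‖x t‖ ≤ β √N`.
By Markov's inequality the set `E = {t | β ‖f‖ ≤ |⟪f, x t⟫|}` has measure at most
`∫ |⟪f, x t⟫| dν / (β ‖f‖)`, and averaging `∫_E ⟪·, x t⟫²` over an orthonormal basis produces a
vector `g` with `‖g‖ = ‖f‖` and `∫_E ⟪g, x t⟫² ≤ β² ‖f‖² ν(E)`. Since
`(|a + b| - |a - b|)² = 4 min (a², b²)`, stable phase retrieval for the pair `f ± g` bounds
`‖f‖²` by `κ²` times `∫_E ⟪g, x t⟫² + ∫_{Eᶜ} ⟪f, x t⟫²`, and both terms are at most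
`β ‖f‖ ∫ |⟪f, x t⟫| dν`.
Applied to `μ` and to the uniform measure on the sample points, and combined with the
Cauchy–Schwarz bounds `∫ |⟪v, x t⟫| dμ ≤ ‖v‖` and `(1/M) ∑ |⟪v, x t_j⟫| ≤ √B ‖v‖`,
this gives the two `L₁` estimates.
-/

open ProbabilityTheory in
lemma integral_uniformOn_univ {ι : Type*} [Fintype ι] [MeasurableSpace ι]
    [MeasurableSingletonClass ι] (g : ι → ℝ) :
    ∫ i, g i ∂(uniformOn (univ : Set ι)) = (Fintype.card ι : ℝ)⁻¹ * ∑ i, g i := by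
  rw [integral_fintype Integrable.of_finite, Finset.mul_sum]
  simp [measureReal_def, uniformOn_univ]

section Integrals

variable {Ω : Type*} [MeasurableSpace Ω] {ν : Measure Ω}

open ProbabilityTheory in
lemma integral_abs_le_sqrt_integral_sq [IsProbabilityMeasure ν] {y : Ω → ℝ} (hy : MemLp y 2 ν) :
    ∫ t, |y t| ∂ν ≤ √(∫ t, y t ^ 2 ∂ν) := by
  have := variance_nonneg (|y|) ν
  rw [variance_eq_sub hy.abs] at this
  simp only [Pi.pow_apply, Pi.abs_apply, sq_abs] at this
  exact Real.le_sqrt_of_sq_le (by linarith)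

lemma integral_min_le_setIntegral_add_setIntegral_compl {u v : Ω → ℝ} (hu : Integrable u ν)
    (hv : Integrable v ν) {E : Set Ω} (hE : MeasurableSet E) :
    ∫ t, min (u t) (v t) ∂ν ≤ ∫ t in E, v t ∂ν + ∫ t in Eᶜ, u t ∂ν := by
  have hmin : Integrable (fun t => min (u t) (v t)) ν := hu.inf hv
  rw [← integral_add_compl hE hmin]
  gcongr ?_ + ?_
  · exact setIntegral_mono hmin.integrableOn hv.integrableOn fun t => min_le_right _ _
  · exact setIntegral_mono hmin.integrableOn hu.integrableOn fun t => min_le_left _ _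

lemma setIntegral_sq_le_mul_integral_abs {y : Ω → ℝ} (hy : MemLp y 2 ν) (hy₁ : Integrable y ν)
    {a : ℝ} (ha : 0 ≤ a) {S : Set Ω} (hS : MeasurableSet S) (hSa : ∀ t ∈ S, |y t| ≤ a) :
    ∫ t in S, y t ^ 2 ∂ν ≤ a * ∫ t, |y t| ∂ν :=
  calc ∫ t in S, y t ^ 2 ∂ν ≤ ∫ t in S, a * |y t| ∂ν := by
        refine setIntegral_mono_on hy.integrable_sq.integrableOn
          (hy₁.abs.const_mul a).integrableOn hS fun t ht => ?_
        rw [← sq_abs, sq]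
        exact mul_le_mul_of_nonneg_right (hSa t ht) (abs_nonneg _)
    _ ≤ a * ∫ t, |y t| ∂ν := by
        rw [integral_const_mul]
        exact mul_le_mul_of_nonneg_left
          (setIntegral_le_integral hy₁.abs (ae_of_all _ fun _ => abs_nonneg _)) ha

end Integrals

lemma abs_add_sub_abs_sub_sq (a b : ℝ) : (|a + b| - |a - b|) ^ 2 = 4 * min (a ^ 2) (b ^ 2) := by
  have h : |a + b| * |a - b| = |a ^ 2 - b ^ 2| := by rw [← abs_mul]; ring_nf
  rcases le_total (a ^ 2) (b ^ 2) with hab | hab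
  · rw [abs_of_nonpos (sub_nonpos.2 hab)] at h
    rw [min_eq_left hab]
    nlinarith [sq_abs (a + b), sq_abs (a - b)]
  · rw [abs_of_nonneg (sub_nonneg.2 hab)] at h
    rw [min_eq_right hab]
    nlinarith [sq_abs (a + b), sq_abs (a - b)]

section StablePhaseRetrieval

variable {H : Type*} [NormedAddCommGroup H] [InnerProductSpace ℝ H] {Ω : Type*} [MeasurableSpace Ω]

def StablePhaseRetrieval (ν : Measure Ω) (x : Ω → H) (κ : ℝ) : Prop :=
  ∀ f g : H, min ‖f - g‖ ‖f + g‖ ≤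
    κ * (∫ t, (|⟪f, x t⟫| - |⟪g, x t⟫|) ^ 2 ∂ν) ^ ((1 : ℝ) / 2)

variable {ν : Measure Ω} {x : Ω → H}

lemma memLp_inner_of_norm_le [IsFiniteMeasure ν] (hmeas : ∀ v : H, Measurable fun t => ⟪v, x t⟫)
    {R : ℝ} (hR : ∀ t, ‖x t‖ ≤ R) (v : H) (p : ENNReal) :
    MemLp (fun t => ⟪v, x t⟫) p ν :=
  MemLp.of_bound (hmeas v).aestronglyMeasurable (‖v‖ * R) <| ae_of_all _ fun t =>
    (norm_inner_le_norm v (x t)).trans (mul_le_mul_of_nonneg_left (hR t) (norm_nonneg v))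

lemma exists_norm_eq_integral_inner_sq_le [FiniteDimensional ℝ H] [Nontrivial H]
    [IsFiniteMeasure ν] (hmeas : ∀ v : H, Measurable fun t => ⟪v, x t⟫) {β : ℝ}
    (hbd : ∀ t, ‖x t‖ ≤ β * √(Module.finrank ℝ H)) {r : ℝ} (hr : 0 ≤ r) :
    ∃ g : H, ‖g‖ = r ∧ ∫ t, ⟪g, x t⟫ ^ 2 ∂ν ≤ (r * β) ^ 2 * ν.real univ := by
  set n := Module.finrank ℝ H
  let b := stdOrthonormalBasis ℝ H
  have hsq (v : H) : Integrable (fun t => ⟪v, x t⟫ ^ 2) ν :=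
    (memLp_inner_of_norm_le hmeas hbd v 2).integrable_sq
  have hsum : ∑ i, ∫ t, ⟪b i, x t⟫ ^ 2 ∂ν ≤ n * (β ^ 2 * ν.real univ) := by
    rw [← integral_finsetSum _ fun i _ => hsq (b i)]
    simp_rw [b.sum_sq_inner_right]
    calc ∫ t, ‖x t‖ ^ 2 ∂ν ≤ ∫ _, (β * √n) ^ 2 ∂ν :=
          integral_mono_of_nonneg (ae_of_all _ fun t => sq_nonneg _) (integrable_const _)
            (ae_of_all _ fun t => pow_le_pow_left₀ (norm_nonneg _) (hbd t) 2)
      _ = n * (β ^ 2 * ν.real univ) := by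
          rw [integral_const, smul_eq_mul, mul_pow, Real.sq_sqrt n.cast_nonneg]; ring
  have : Nonempty (Fin n) := ⟨⟨0, Module.finrank_pos⟩⟩
  obtain ⟨i, -, hi⟩ := Finset.exists_le_of_sum_le Finset.univ_nonempty
    (by simpa using hsum : ∑ i, ∫ t, ⟪b i, x t⟫ ^ 2 ∂ν ≤ ∑ _i, β ^ 2 * ν.real univ)
  refine ⟨r • b i, by simp [norm_smul, abs_of_nonneg hr], ?_⟩
  simp_rw [real_inner_smul_left, mul_pow, integral_const_mul]
  rw [mul_assoc]
  exact mul_le_mul_of_nonneg_left hi (sq_nonneg r)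

lemma norm_le_integral_abs_inner_of_stablePhaseRetrieval [FiniteDimensional ℝ H] [Nontrivial H]
    [IsFiniteMeasure ν] (hmeas : ∀ v : H, Measurable fun t => ⟪v, x t⟫) {β κ : ℝ} (hβ : 0 ≤ β)
    (hbd : ∀ t, ‖x t‖ ≤ β * √(Module.finrank ℝ H)) (hspr : StablePhaseRetrieval ν x κ) (f : H) :
    ‖f‖ ≤ 2 * κ ^ 2 * β * ∫ t, |⟪f, x t⟫| ∂ν := by
  have hLp := memLp_inner_of_norm_le (ν := ν) hmeas hbd
  have hint : Integrable (fun t => ⟪f, x t⟫) ν := (hLp f 1).integrable le_rfl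
  set c := ∫ t, |⟪f, x t⟫| ∂ν
  set a := β * ‖f‖
  set E := {t | a ≤ |⟪f, x t⟫|}
  have hE : MeasurableSet E := measurableSet_le measurable_const (hmeas f).abs
  have hmarkov : a * ν.real E ≤ c :=
    mul_meas_ge_le_integral_of_nonneg (ae_of_all _ fun _ => abs_nonneg _) hint.abs a
  obtain ⟨g, hg, hgE⟩ := exists_norm_eq_integral_inner_sq_le (ν := ν.restrict E) hmeas hbd
    (norm_nonneg f)
  rw [measureReal_restrict_apply_univ] at hgE
  have hdiff : ∫ t, (|⟪f + g, x t⟫| - |⟪f - g, x t⟫|) ^ 2 ∂ν ≤ 8 * (a * c) := by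
    simp_rw [inner_add_left, inner_sub_left, abs_add_sub_abs_sub_sq, integral_const_mul]
    have hsplit := integral_min_le_setIntegral_add_setIntegral_compl (hLp f 2).integrable_sq
      (hLp g 2).integrable_sq hE
    have hsmall : ∫ t in Eᶜ, ⟪f, x t⟫ ^ 2 ∂ν ≤ a * c :=
      setIntegral_sq_le_mul_integral_abs (hLp f 2) hint (by positivity) hE.compl
        fun t ht => (not_le.1 (notMem_ofPred_iff.1 ht)).le
    have hlarge : a * (a * ν.real E) ≤ a * c := by gcongr
    nlinarith
  have hkey := hspr (f + g) (f - g)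
  rw [show f + g - (f - g) = (2 : ℝ) • g by module, show f + g + (f - g) = (2 : ℝ) • f by module,
    norm_smul, norm_smul, hg, min_self, Real.norm_two, ← Real.sqrt_eq_rpow] at hkey
  have hsq : (2 * ‖f‖) ^ 2 ≤ κ ^ 2 * (8 * (a * c)) :=
    calc (2 * ‖f‖) ^ 2 ≤ (κ * √(∫ t, (|⟪f + g, x t⟫| - |⟪f - g, x t⟫|) ^ 2 ∂ν)) ^ 2 :=
          pow_le_pow_left₀ (by positivity) hkey 2
      _ ≤ κ ^ 2 * (8 * (a * c)) := by
          rw [mul_pow, Real.sq_sqrt (integral_nonneg fun _ => sq_nonneg _)]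
          exact mul_le_mul_of_nonneg_left hdiff (sq_nonneg κ)
  rcases (norm_nonneg f).eq_or_lt with hf | hf
  · rw [← hf]; positivity
  · nlinarith

variable {B : ℝ}

lemma one_le_mul_sqrt_of_stablePhaseRetrieval [Nontrivial H] {κ : ℝ} (hκ : 0 ≤ κ)
    (hspr : StablePhaseRetrieval ν x κ) (hB : ∀ v : H, ∫ t, ⟪v, x t⟫ ^ 2 ∂ν ≤ B * ‖v‖ ^ 2) :
    1 ≤ κ * √B := by
  obtain ⟨e, he⟩ := exists_norm_eq H zero_le_one
  have h := hspr e 0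
  simp only [sub_zero, add_zero, min_self, he, inner_zero_left, abs_zero, sq_abs,
    ← Real.sqrt_eq_rpow] at h
  calc 1 ≤ κ * √(∫ t, ⟪e, x t⟫ ^ 2 ∂ν) := h
    _ ≤ κ * √B := by
      gcongr
      simpa [he] using hB e

lemma integral_abs_inner_le_sqrt_mul_norm [IsProbabilityMeasure ν] {v : H}
    (hv : MemLp (fun t => ⟪v, x t⟫) 2 ν) (hB : ∫ t, ⟪v, x t⟫ ^ 2 ∂ν ≤ B * ‖v‖ ^ 2) :
    ∫ t, |⟪v, x t⟫| ∂ν ≤ √B * ‖v‖ :=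
  calc ∫ t, |⟪v, x t⟫| ∂ν ≤ √(∫ t, ⟪v, x t⟫ ^ 2 ∂ν) := integral_abs_le_sqrt_integral_sq hv
    _ ≤ √(B * ‖v‖ ^ 2) := Real.sqrt_le_sqrt hB
    _ = √B * ‖v‖ := by rw [Real.sqrt_mul' _ (sq_nonneg _), Real.sqrt_sq (norm_nonneg v)]

end StablePhaseRetrieval

lemma Real.rpow_three_halves {x : ℝ} (hx : 0 ≤ x) : x ^ ((3 : ℝ) / 2) = √x ^ 3 := by
  rw [Real.sqrt_eq_rpow, ← Real.rpow_mul_natCast hx]; norm_num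

lemma Real.rpow_neg_three_halves {x : ℝ} (hx : 0 ≤ x) : x ^ (-(3 : ℝ) / 2) = (√x ^ 3)⁻¹ := by
  rw [neg_div, Real.rpow_neg hx, Real.rpow_three_halves hx]

lemma two_mul_sq_mul_le {κ β : ℝ} (hκ : 1 ≤ κ) :
    2 * κ ^ 2 * β ≤ κ ^ 3 * (1 + β ^ 2) ^ ((3 : ℝ) / 2) := by
  have hs : 1 ≤ 1 + β ^ 2 := by nlinarith
  calc 2 * κ ^ 2 * β ≤ κ ^ 2 * (1 + β ^ 2) := by nlinarith [sq_nonneg (β - 1)]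
    _ ≤ κ ^ 3 * (1 + β ^ 2) ^ ((3 : ℝ) / 2) := by
      gcongr
      · norm_num
      · exact Real.self_le_rpow_of_one_le hs (by norm_num)

lemma lower_constant_mul_le_one {A B C β : ℝ} (hA : 0 < A) (hAB : A ≤ B) (hC : 0 < C)
    (hCB : 1 ≤ C * √B) :
    A ^ ((1 : ℝ) / 2) * B ^ (-(3 : ℝ) / 2) * C ^ (-(3 : ℝ)) *
      (1 + A⁻¹ * β ^ 2) ^ (-(3 : ℝ) / 2) * (2 * C ^ 2 * β) ≤ 1 := by
  have hs : 1 ≤ 1 + A⁻¹ * β ^ 2 := le_add_of_nonneg_right (by positivity)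
  rw [← Real.sqrt_eq_rpow, Real.rpow_neg_three_halves (by linarith),
    Real.rpow_neg_three_halves (by linarith), Real.rpow_neg hC.le, Real.rpow_ofNat]
  set a := √A
  set b := √B
  set r := √(1 + A⁻¹ * β ^ 2)
  have ha : 0 < a := Real.sqrt_pos.2 hA
  have hab : a ≤ b := Real.sqrt_le_sqrt hAB
  have hb : 0 < b := ha.trans_le hab
  have hr : 1 ≤ r := Real.one_le_sqrt.2 hs
  have hr2 : a ^ 2 * r ^ 2 = a ^ 2 + β ^ 2 := by
    rw [Real.sq_sqrt hA.le, Real.sq_sqrt (by linarith)]; field_simp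
  have hamgm : 2 * a * β ≤ a ^ 2 * r ^ 2 := by nlinarith [sq_nonneg (a - β)]
  rw [show a * (b ^ 3)⁻¹ * (C ^ 3)⁻¹ * (r ^ 3)⁻¹ * (2 * C ^ 2 * β)
      = 2 * a * β * C ^ 2 / (b ^ 3 * C ^ 3 * r ^ 3) by ring, div_le_one (by positivity)]
  calc 2 * a * β * C ^ 2 ≤ a ^ 2 * r ^ 2 * C ^ 2 := by gcongr
    _ ≤ b ^ 2 * r ^ 3 * C ^ 2 * 1 := by
      rw [mul_one]; gcongr
      norm_num
    _ ≤ b ^ 2 * r ^ 3 * C ^ 2 * (C * b) := by gcongr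
    _ = b ^ 3 * C ^ 3 * r ^ 3 := by ring

theorem stmt15_general {H : Type*} [NormedAddCommGroup H] [InnerProductSpace ℝ H]
    (N : ℕ) (hN : 1 ≤ N) (hdim : Module.finrank ℝ H = N)
    {Ω : Type*} [MeasurableSpace Ω] (μ : Measure Ω) [IsProbabilityMeasure μ]
    (x : Ω → H) (hmeas : ∀ v : H, Measurable fun t => ⟪v, x t⟫)
    (β κ : ℝ) (hβ : 0 < β) (hκ : 0 < κ)
    (hParseval : ∀ v : H, ∫ t, ⟪v, x t⟫ ^ 2 ∂μ = ‖v‖ ^ 2)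
    (hbd : ∀ t : Ω, ‖x t‖ ≤ β * Real.sqrt N)
    (hspr : ∀ f g : H, min ‖f - g‖ ‖f + g‖ ≤
      κ * (∫ t, (|⟪f, x t⟫| - |⟪g, x t⟫|) ^ 2 ∂μ) ^ ((1 : ℝ) / 2))
    (M : ℕ) (ts : Fin M → Ω) (A B C : ℝ) (hA : 0 < A) (hC : 0 < C)
    (hframe : ∀ v : H, A * ‖v‖ ^ 2 ≤ (1 / M : ℝ) * ∑ j, ⟪v, x (ts j)⟫ ^ 2 ∧
      (1 / M : ℝ) * ∑ j, ⟪v, x (ts j)⟫ ^ 2 ≤ B * ‖v‖ ^ 2)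
    (hsprM : ∀ f g : H, min ‖f - g‖ ‖f + g‖ ≤
      C * ((1 / M : ℝ) * ∑ j, (|⟪f, x (ts j)⟫| - |⟪g, x (ts j)⟫|) ^ 2) ^ ((1 : ℝ) / 2)) :
    ∀ v : H,
      (A * ∫ t, ⟪v, x t⟫ ^ 2 ∂μ ≤ (1 / M : ℝ) * ∑ j, ⟪v, x (ts j)⟫ ^ 2 ∧
        (1 / M : ℝ) * ∑ j, ⟪v, x (ts j)⟫ ^ 2 ≤ B * ∫ t, ⟪v, x t⟫ ^ 2 ∂μ) ∧
      (A ^ ((1 : ℝ) / 2) * B ^ (-(3 : ℝ) / 2) * C ^ (-(3 : ℝ)) *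
            (1 + A⁻¹ * β ^ 2) ^ (-(3 : ℝ) / 2) * ∫ t, |⟪v, x t⟫| ∂μ ≤
          (1 / M : ℝ) * ∑ j, |⟪v, x (ts j)⟫| ∧
        (1 / M : ℝ) * ∑ j, |⟪v, x (ts j)⟫| ≤
          B ^ ((1 : ℝ) / 2) * κ ^ 3 * (1 + β ^ 2) ^ ((3 : ℝ) / 2) * ∫ t, |⟪v, x t⟫| ∂μ) := by
  have : FiniteDimensional ℝ H := Module.finite_of_finrank_pos (hdim ▸ hN)
  have : Nontrivial H := Module.nontrivial_of_finrank_pos (hdim ▸ hN)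
  rw [← hdim] at hbd
  obtain ⟨e, he⟩ := exists_norm_eq H zero_le_one
  have hM : M ≠ 0 := by
    rintro rfl
    linarith [show A ≤ 0 by simpa [he] using (hframe e).1]
  have : Nonempty (Fin M) := ⟨⟨0, Nat.pos_of_ne_zero hM⟩⟩
  -- Sample means are integrals against the uniform probability measure on `Fin M`.
  set ν : Measure (Fin M) := ProbabilityTheory.uniformOn univ
  have hmean (g : Fin M → ℝ) : (1 / M : ℝ) * ∑ j, g j = ∫ j, g j ∂ν := by
    rw [integral_uniformOn_univ, Fintype.card_fin, one_div]
  simp only [hmean] at hframe hsprM ⊢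
  have hAB : A ≤ B := by simpa [he] using (hframe e).1.trans (hframe e).2
  have hB : 0 < B := hA.trans_le hAB
  have hκ1 : 1 ≤ κ := by
    simpa using one_le_mul_sqrt_of_stablePhaseRetrieval hκ.le hspr (B := 1) (by simp [hParseval])
  have hCB : 1 ≤ C * √B :=
    one_le_mul_sqrt_of_stablePhaseRetrieval hC.le hsprM fun v => (hframe v).2
  intro v
  refine ⟨hParseval v ▸ hframe v, ?_, ?_⟩
  · have hcont : ∫ t, |⟪v, x t⟫| ∂μ ≤ ‖v‖ := by
      simpa using integral_abs_inner_le_sqrt_mul_norm (B := 1)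
        (memLp_inner_of_norm_le hmeas hbd v 2) (by simp [hParseval])
    have hdisc := norm_le_integral_abs_inner_of_stablePhaseRetrieval
      (fun _ => Measurable.of_discrete) hβ.le (fun j => hbd (ts j)) hsprM v
    refine (mul_le_mul_of_nonneg_left (hcont.trans hdisc) (by positivity)).trans ?_
    rw [← mul_assoc]
    exact mul_le_of_le_one_left (integral_nonneg fun _ => abs_nonneg _)
      (lower_constant_mul_le_one hA hAB hC hCB)
  · have hcont := norm_le_integral_abs_inner_of_stablePhaseRetrieval hmeas hβ.le hbd hspr v
    calc ∫ j, |⟪v, x (ts j)⟫| ∂ν ≤ √B * ‖v‖ :=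
          integral_abs_inner_le_sqrt_mul_norm MemLp.of_discrete (hframe v).2
      _ ≤ √B * (2 * κ ^ 2 * β * ∫ t, |⟪v, x t⟫| ∂μ) := by gcongr
      _ ≤ √B * (κ ^ 3 * (1 + β ^ 2) ^ ((3 : ℝ) / 2) * ∫ t, |⟪v, x t⟫| ∂μ) := by
          gcongr √B * (?_ * _)
          exact two_mul_sq_mul_le hκ1
      _ = _ := by rw [Real.sqrt_eq_rpow]; ring

theorem stmt15 {H : Type*} [NormedAddCommGroup H] [InnerProductSpace ℝ H]
    (N : ℕ) (hN : 1 ≤ N) (hdim : Module.finrank ℝ H = N)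
    {Ω : Type*} [MeasurableSpace Ω] (μ : Measure Ω) [IsProbabilityMeasure μ]
    (x : Ω → H) (hmeas : ∀ v : H, Measurable fun t => ⟪v, x t⟫)
    (β κ : ℝ) (hβ : 0 < β) (hκ : 0 < κ)
    (hParseval : ∀ v : H, ∫ t, ⟪v, x t⟫ ^ 2 ∂μ = ‖v‖ ^ 2)
    (hbd : ∀ t : Ω, ‖x t‖ ≤ β * Real.sqrt N)
    (hspr : ∀ f g : H, min ‖f - g‖ ‖f + g‖ ≤
      κ * (∫ t, (|⟪f, x t⟫| - |⟪g, x t⟫|) ^ 2 ∂μ) ^ ((1 : ℝ) / 2))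
    (M : ℕ) (ts : Fin M → Ω) (A B C : ℝ) (hA : 0 < A) (hB : 0 < B) (hC : 0 < C)
    (hframe : ∀ v : H, A * ‖v‖ ^ 2 ≤ (1 / M : ℝ) * ∑ j, ⟪v, x (ts j)⟫ ^ 2 ∧
      (1 / M : ℝ) * ∑ j, ⟪v, x (ts j)⟫ ^ 2 ≤ B * ‖v‖ ^ 2)
    (hsprM : ∀ f g : H, min ‖f - g‖ ‖f + g‖ ≤
      C * ((1 / M : ℝ) * ∑ j, (|⟪f, x (ts j)⟫| - |⟪g, x (ts j)⟫|) ^ 2) ^ ((1 : ℝ) / 2)) :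
    ∀ v : H,
      (A * ∫ t, ⟪v, x t⟫ ^ 2 ∂μ ≤ (1 / M : ℝ) * ∑ j, ⟪v, x (ts j)⟫ ^ 2 ∧
        (1 / M : ℝ) * ∑ j, ⟪v, x (ts j)⟫ ^ 2 ≤ B * ∫ t, ⟪v, x t⟫ ^ 2 ∂μ) ∧
      (A ^ ((1 : ℝ) / 2) * B ^ (-(3 : ℝ) / 2) * C ^ (-(3 : ℝ)) *
            (1 + A⁻¹ * β ^ 2) ^ (-(3 : ℝ) / 2) * ∫ t, |⟪v, x t⟫| ∂μ ≤
          (1 / M : ℝ) * ∑ j, |⟪v, x (ts j)⟫| ∧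
        (1 / M : ℝ) * ∑ j, |⟪v, x (ts j)⟫| ≤
          B ^ ((1 : ℝ) / 2) * κ ^ 3 * (1 + β ^ 2) ^ ((3 : ℝ) / 2) * ∫ t, |⟪v, x t⟫| ∂μ) :=
  stmt15_general N hN hdim μ x hmeas β κ hβ hκ hParseval hbd hspr M ts A B C hA hC hframe hsprM
end
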